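/- For a finite field F_q and integer k with 0 ≤ k ≤ q, the dual of the affine Reed–Solomon code RS_q(k) equals RS_q(q-k). -/
import Mathlib

noncomputable def dualCode (F : Type*) [Field F] {ι : Type*} [Fintype ι]
    (C : Submodule F (ι → F)) : Submodule F (ι → F) where
  carrier := {x | ∀ c ∈ C, ∑ i, x i * c i = 0}
  zero_mem' := by intro c _; simp
  add_mem' := by
    intro x y hx hy c hc
    simp only [Pi.add_apply, add_mul, Finset.sum_add_distrib]
    rw [hx c hc, hy c hc, add_zero]
  smul_mem' := by
    intro a x hx c hc
    simp only [Pi.smul_apply, smul_eq_mul, mul_assoc, ← Finset.mul_sum]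
    rw [hx c hc, mul_zero]

noncomputable def minDist (F : Type*) [Field F] {ι : Type*} [Fintype ι] [DecidableEq F]
    (C : Submodule F (ι → F)) : ℕ :=
  sInf {w | ∃ c ∈ C, c ≠ 0 ∧ hammingNorm c = w}

/-- The affine Reed–Solomon code `RS_q(k)`: evaluations of polynomials of degree `< k` at
all elements of `F`.  By convention it is `{0}` for `k ≤ 0` and the full space for `k ≥ q`. -/
noncomputable def RS (F : Type*) [Field F] (k : ℤ) : Submodule F (F → F) :=
  (Polynomial.degreeLT F k.toNat).map
    (LinearMap.pi fun α : F => (Polynomial.aeval α).toLinearMap)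

section Aux

open Polynomial Module

variable {F : Type*} [Field F] [Fintype F] [DecidableEq F]

lemma RS_aux_toDual_pi (x c : F → F) :
    (Pi.basisFun F F).toDual x c = ∑ i, x i * c i := by
  conv_lhs => rw [← (Pi.basisFun F F).sum_repr c]
  rw [map_sum]
  simp only [map_smul, Basis.toDual_apply_left, Pi.basisFun_repr, smul_eq_mul]
  exact Finset.sum_congr rfl fun i _ => mul_comm _ _

lemma RS_aux_dualCode_eq_comap (C : Submodule F (F → F)) :
    dualCode F C =
      C.dualAnnihilator.comap (Pi.basisFun F F).toDualEquiv.toLinearMap := by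
  ext x
  simp only [Submodule.mem_comap, Submodule.mem_dualAnnihilator]
  constructor
  · intro hx c hc
    rw [show ((Pi.basisFun F F).toDualEquiv.toLinearMap x) c = ∑ i, x i * c i from
      RS_aux_toDual_pi x c]
    exact hx c hc
  · intro hx c hc
    rw [← RS_aux_toDual_pi x c]; exact hx c hc

set_option synthInstance.maxHeartbeats 1000000 in
lemma RS_aux_finrank_dualCode (C : Submodule F (F → F)) :
    finrank F (dualCode F C) = Fintype.card F - finrank F C := by
  have h0 : finrank F (dualCode F C) = finrank F C.dualAnnihilator := by
    rw [RS_aux_dualCode_eq_comap]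
    exact (LinearEquiv.ofSubmodule' (Pi.basisFun F F).toDualEquiv C.dualAnnihilator).finrank_eq
  rw [h0]
  have h1 : finrank F ((F → F) ⧸ C) = finrank F C.dualAnnihilator :=
    (Subspace.quotEquivAnnihilator C).finrank_eq
  have h2 := Submodule.finrank_quotient_add_finrank C
  have h3 : finrank F (F → F) = Fintype.card F := by
    simp [Module.finrank_fintype_fun_eq_card]
  omega

lemma RS_aux_finrank_RS (m : ℕ) (hm : m ≤ Fintype.card F) :
    finrank F (RS F (m : ℤ)) = m := by
  have htn : ((m : ℤ)).toNat = m := rfl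
  set f := (LinearMap.pi fun α : F => (Polynomial.aeval α).toLinearMap :
    F[X] →ₗ[F] (F → F))
  have hmap : RS F (m : ℤ) = LinearMap.range (f.comp (degreeLT F m).subtype) := by
    rw [RS, htn, LinearMap.range_comp, Submodule.range_subtype]
  rw [hmap]
  have hker : LinearMap.ker (f.comp (degreeLT F m).subtype) = ⊥ := by
    rw [LinearMap.ker_eq_bot']
    rintro ⟨p, hp⟩ hfp
    have hz : ∀ α : F, p.eval α = 0 := by
      intro α
      simpa [f] using congrFun hfp α
    have : p = 0 := by
      by_contra hp0
      refine hp0 (Polynomial.eq_zero_of_forall_eval_zero_of_natDegree_lt_card p hz ?_)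
      rw [Cardinal.mk_fintype]
      exact_mod_cast lt_of_lt_of_le
        ((Polynomial.natDegree_lt_iff_degree_lt hp0).2 (mem_degreeLT.1 hp)) hm
    simpa using this
  rw [← (LinearMap.quotKerEquivRange _).finrank_eq, hker,
    (Submodule.quotEquivOfEqBot _ rfl).finrank_eq,
    (Polynomial.degreeLTEquiv F m).finrank_eq]
  simp

omit [DecidableEq F] in
lemma RS_aux_sum_eval (s : F[X]) (hs : s.natDegree < Fintype.card F - 1) :
    ∑ α : F, s.eval α = 0 := by
  simp_rw [Polynomial.eval_eq_sum_range]
  rw [Finset.sum_comm]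
  refine Finset.sum_eq_zero fun i hi => ?_
  rw [← Finset.mul_sum, FiniteField.sum_pow_lt_card_sub_one (K := F) i (by
    simp only [Finset.mem_range] at hi; omega), mul_zero]

end Aux

/-- for `0 ≤ k ≤ q`, the dual of the affine Reed–Solomon code `RS_q(k)` is
`RS_q(q - k)`. -/
theorem RS_dual (F : Type*) [Field F] [Fintype F] (q k : ℕ)
    (hq : Fintype.card F = q) (hk : k ≤ q) :
    dualCode F (RS F (k : ℤ)) = RS F ((q : ℤ) - k) := by
  classical
  open Polynomial Module in
  have hcast : ((q : ℤ) - k) = ((q - k : ℕ) : ℤ) := by omega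
  rw [hcast]
  have hle : RS F ((q - k : ℕ) : ℤ) ≤ dualCode F (RS F (k : ℤ)) := by
    rintro x ⟨p, hp, rfl⟩ c ⟨r, hr, rfl⟩
    have heval : ∀ s : F[X], ∀ α : F,
        (LinearMap.pi (fun α : F => (Polynomial.aeval α).toLinearMap) s) α = s.eval α := by
      intro s α; simp
    have : ∑ i : F,
        (LinearMap.pi (fun α : F => (Polynomial.aeval α).toLinearMap) p) i *
        (LinearMap.pi (fun α : F => (Polynomial.aeval α).toLinearMap) r) i
        = ∑ α : F, (p * r).eval α := by
      refine Finset.sum_congr rfl fun α _ => ?_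
      rw [heval, heval, Polynomial.eval_mul]
    rw [this]
    by_cases hpr : p * r = 0
    · simp [hpr]
    · have hp0 : p ≠ 0 := fun h => hpr (by simp [h])
      have hr0 : r ≠ 0 := fun h => hpr (by simp [h])
      refine RS_aux_sum_eval _ ?_
      rw [Polynomial.natDegree_mul hp0 hr0, hq]
      have h1 : p.natDegree < q - k := by
        have := (Polynomial.natDegree_lt_iff_degree_lt hp0).2 (Polynomial.mem_degreeLT.1 hp)
        simpa using this
      have h2 : r.natDegree < k := by
        have := (Polynomial.natDegree_lt_iff_degree_lt hr0).2 (Polynomial.mem_degreeLT.1 hr)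
        simpa using this
      omega
  have hd : finrank F (dualCode F (RS F (k : ℤ))) = q - k := by
    rw [RS_aux_finrank_dualCode, RS_aux_finrank_RS k (hq ▸ hk), hq]
  have hr : finrank F (RS F ((q - k : ℕ) : ℤ)) = q - k :=
    RS_aux_finrank_RS (q - k) (by omega)
  exact (Submodule.eq_of_le_of_finrank_le hle (by rw [hd, hr])).symm
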